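/- arXiv:1607.06784 — 3 statements merged into one kernel-verified Lean document; each statement's English description precedes it below -/
import Mathlib

section
/- Small cancellation property of the words V_i: let n ≥ 2, M = 24n, and V_i = h₁ h₂^{Mi+1} h₁ h₂^{Mi+2} ⋯ h₁ h₂^{M(i+1)} h₁. Suppose U is a common subword of V_i and V_j, say V_i = A U B and V_j = A' U B' as literal factorizations. Then either |U| < (4/M)·min{|V_i|, |V_j|}, or i = j and A = A' (hence the two occurrences coincide). -/
/-- The two-letter alphabet {h₁, h₂}, encoded as `Fin 2`. -/
def h1 : Fin 2 := 0
def h2 : Fin 2 := 1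

/-- The word `V_i = h₁ h₂^{Mi+1} h₁ h₂^{Mi+2} ⋯ h₁ h₂^{M(i+1)} h₁`. -/
def Vword (M i : ℕ) : List (Fin 2) :=
  [h1] ++ (List.range M).flatMap (fun j => List.replicate (M * i + 1 + j) h2 ++ [h1])

/-!
A subword containing two letters `h₁` contains a full gap `h₁ h₂^a h₁` of `V_i`. The exponents
occurring in `V_i` are `Mi+1, …, M(i+1)`, so `a` determines both `i` (by division with remainder
by `M`) and the position of the gap inside `V_i`, hence also the prefix preceding the gap.
A subword with at most one `h₁` is at most two `h₂`-runs around one `h₁`, so its length is at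
most `2M(i+1) + 1`, which is below `(4/M)·|V_i|` because `2|V_i| = M(2Mi + M + 3) + 2`.
-/

open List

lemma Nat.eq_and_eq_of_mul_add_eq_mul_add {M i j k k' : ℕ} (hk : k < M) (hk' : k' < M)
    (h : M * i + k = M * j + k') : i = j ∧ k = k' := by
  have hM : 0 < M := by omega
  obtain ⟨hdi, hmk⟩ := (Nat.div_mod_unique hM).mpr ⟨(add_comm _ _).trans h, hk⟩
  obtain ⟨hdj, hmk'⟩ := (Nat.div_mod_unique hM).mpr ⟨add_comm _ _, hk'⟩
  exact ⟨hdi.symm.trans hdj, hmk.symm.trans hmk'⟩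

lemma List.two_mul_sum_map_range_add_add (c m : ℕ) :
    2 * ((range m).map (c + ·)).sum + m = m * (2 * c + m) := by
  induction m with
  | zero => simp
  | succ m ih =>
    rw [range_succ, map_append, sum_append, map_singleton, sum_singleton]
    nlinarith

lemma List.infix_or_infix_of_infix_append_cons {α : Type*} {s X Y : List α} {x : α}
    (hx : x ∉ s) (h : s <:+: X ++ x :: Y) : s <:+: X ∨ s <:+: Y := by
  rcases infix_append_iff_ne_nil.mp h with hX | hxY | ⟨_, s₂, -, hs₂, rfl, -, t, ht⟩
  · exact Or.inl hX
  · rcases infix_cons_iff.mp hxY with ⟨t, ht⟩ | hY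
    · cases s with
      | nil => exact Or.inl nil_infix
      | cons y s => exact absurd ((cons.inj ht).1 ▸ mem_cons_self) hx
    · exact Or.inr hY
  · obtain ⟨y, s₂, rfl⟩ := exists_cons_of_ne_nil hs₂
    exact absurd (mem_append_right _ ((cons.inj ht).1 ▸ mem_cons_self)) hx

lemma List.replicate_append_cons_inj {α : Type*} {x y : α} (hxy : x ≠ y) :
    ∀ {a b : ℕ} {u v : List α},
      replicate a y ++ x :: u = replicate b y ++ x :: v → a = b ∧ u = v
  | 0, 0, _, _, h => by simpa using h
  | a + 1, b + 1, _, _, h => by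
    simp only [replicate_succ, cons_append, cons.injEq, true_and] at h
    exact (replicate_append_cons_inj hxy h).imp_left (congrArg (· + 1))
  | 0, _ + 1, _, _, h => absurd (cons.inj h).1 hxy
  | _ + 1, 0, _, _, h => absurd (cons.inj h).1 hxy.symm

lemma List.replicate_append_eq_append_cons {α : Type*} {x y : α} (hxy : x ≠ y) {b : ℕ}
    {Z P Y : List α} (h : replicate b y ++ Z = P ++ x :: Y) :
    ∃ P', P = replicate b y ++ P' ∧ Z = P' ++ x :: Y := by
  rcases append_eq_append_iff.mp h with ⟨P', hP, hZ⟩ | ⟨c, hrep, hxY⟩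
  · exact ⟨P', hP, hZ⟩
  · cases c with
    | nil => exact ⟨[], by simpa using hrep.symm, by simpa using hxY.symm⟩
    | cons z c =>
      have hz : z = x := (cons.inj hxY).1.symm
      have : z ∈ replicate b y := hrep ▸ mem_append_right P mem_cons_self
      exact absurd ((eq_of_mem_replicate this) ▸ hz.symm) hxy

lemma h2_ne_h1 : h2 ≠ h1 := by decide

lemma eq_h2_of_ne_h1 {x : Fin 2} (hx : x ≠ h1) : x = h2 := by
  revert x; decide

lemma exists_replicate_h2_append_h1 :
    ∀ {U : List (Fin 2)}, h1 ∈ U → ∃ c D, U = replicate c h2 ++ h1 :: D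
  | x :: U, hU => by
    by_cases hx : x = h1
    · exact ⟨0, U, by simp [hx]⟩
    · obtain ⟨c, D, rfl⟩ :=
        exists_replicate_h2_append_h1 ((mem_cons.mp hU).resolve_left (Ne.symm hx))
      exact ⟨c + 1, D, by simp [replicate_succ, eq_h2_of_ne_h1 hx]⟩

lemma exists_gap_of_two_le_count {U : List (Fin 2)} (hU : 2 ≤ U.count h1) :
    ∃ c a D, U = replicate c h2 ++ h1 :: (replicate a h2 ++ h1 :: D) := by
  have hU₀ : 0 < U.count h1 := by omega
  obtain ⟨c, D, rfl⟩ := exists_replicate_h2_append_h1 (count_pos_iff.mp hU₀)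
  have hD : h1 ∈ D := by simpa [count_append, count_replicate, h2_ne_h1] using hU
  obtain ⟨a, D, rfl⟩ := exists_replicate_h2_append_h1 hD
  exact ⟨c, a, D, rfl⟩

def blockWord (l : List ℕ) : List (Fin 2) :=
  h1 :: l.flatMap (fun a => replicate a h2 ++ [h1])

@[simp] lemma blockWord_nil : blockWord [] = [h1] := rfl

lemma blockWord_cons (a : ℕ) (l : List ℕ) :
    blockWord (a :: l) = h1 :: (replicate a h2 ++ blockWord l) := by
  simp [blockWord]

lemma length_blockWord (l : List ℕ) : (blockWord l).length = (l.map (· + 1)).sum + 1 := by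
  induction l with
  | nil => rfl
  | cons a l ih =>
    rw [blockWord_cons, length_cons, length_append, length_replicate, ih, map_cons, sum_cons]
    omega

lemma Vword_eq_blockWord (M i : ℕ) :
    Vword M i = blockWord ((range M).map (M * i + 1 + ·)) := by
  simp [Vword, blockWord, flatMap_map]

lemma length_le_of_infix_blockWord {L : ℕ} {s : List (Fin 2)} (hs : h1 ∉ s) :
    ∀ {l : List ℕ}, (∀ a ∈ l, a ≤ L) → s <:+: blockWord l → s.length ≤ L
  | [], _, h => by
    rcases infix_or_infix_of_infix_append_cons (X := []) hs h with h | h <;> simp_all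
  | a :: l, hl, h => by
    rw [blockWord_cons, blockWord] at h
    rcases infix_or_infix_of_infix_append_cons (X := []) hs h with h | h
    · simp_all
    rcases infix_or_infix_of_infix_append_cons hs h with h | h
    · exact (h.length_le.trans_eq length_replicate).trans (hl a mem_cons_self)
    · exact length_le_of_infix_blockWord hs (fun b hb => hl b (mem_cons_of_mem a hb)) (infix_cons h)

lemma length_le_of_count_le_one {L : ℕ} {l : List ℕ} (hl : ∀ a ∈ l, a ≤ L)
    {U : List (Fin 2)} (hU : U <:+: blockWord l) (hcount : U.count h1 ≤ 1) :
    U.length ≤ 2 * L + 1 := by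
  by_cases h : h1 ∈ U
  · obtain ⟨s, t, rfl⟩ := append_of_mem h
    rw [count_append, count_cons_self] at hcount
    have hs : h1 ∉ s := count_eq_zero.mp (by omega)
    have ht : h1 ∉ t := count_eq_zero.mp (by omega)
    have := length_le_of_infix_blockWord hs hl (infix_append_left.trans hU)
    have := length_le_of_infix_blockWord ht hl
      (((infix_cons (infix_refl t)).trans infix_append_right).trans hU)
    rw [length_append, length_cons]
    omega
  · have := length_le_of_infix_blockWord h hl hU
    omega

lemma exists_take_of_blockWord_eq {a : ℕ} {Q : List (Fin 2)} :
    ∀ {l : List ℕ} {P : List (Fin 2)}, blockWord l = P ++ h1 :: (replicate a h2 ++ h1 :: Q) →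
      ∃ k, ∃ hk : k < l.length, l[k] = a ∧ P ++ [h1] = blockWord (l.take k)
  | [], P, h => by
    have := congrArg length h
    simp only [blockWord_nil, length_cons, length_nil, length_append, length_replicate] at this
    omega
  | b :: l, [], h => by
    rw [blockWord_cons, blockWord] at h
    simp only [nil_append, cons.injEq, true_and] at h
    obtain ⟨rfl, -⟩ := replicate_append_cons_inj h2_ne_h1.symm h
    exact ⟨0, by simp, rfl, rfl⟩
  | b :: l, p :: P, h => by
    rw [blockWord_cons, cons_append, cons.injEq] at h
    obtain ⟨rfl, h⟩ := h
    obtain ⟨P', rfl, hl⟩ := replicate_append_eq_append_cons h2_ne_h1.symm h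
    obtain ⟨k, hk, hak, hP⟩ := exists_take_of_blockWord_eq hl
    exact ⟨k + 1, by simpa using hk, hak, by simp [blockWord_cons, hP]⟩

lemma eq_of_Vword_eq_append_gap {M i j a : ℕ} {P P' Q Q' : List (Fin 2)}
    (hi : Vword M i = P ++ h1 :: (replicate a h2 ++ h1 :: Q))
    (hj : Vword M j = P' ++ h1 :: (replicate a h2 ++ h1 :: Q')) : i = j ∧ P = P' := by
  rw [Vword_eq_blockWord] at hi hj
  obtain ⟨k, hk, hak, hP⟩ := exists_take_of_blockWord_eq hi
  obtain ⟨k', hk', hak', hP'⟩ := exists_take_of_blockWord_eq hj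
  simp only [length_map, length_range, getElem_map, getElem_range] at hk hk' hak hak'
  obtain ⟨rfl, rfl⟩ := Nat.eq_and_eq_of_mul_add_eq_mul_add (i := i) (j := j) hk hk' (by omega)
  exact ⟨rfl, append_cancel_right (hP.trans hP'.symm)⟩

lemma two_mul_length_Vword (M i : ℕ) :
    2 * (Vword M i).length = M * (2 * M * i + M + 3) + 2 := by
  have := two_mul_sum_map_range_add_add (M * i + 2) M
  rw [Vword_eq_blockWord, length_blockWord, map_map]
  simp only [Function.comp_def, show ∀ k, M * i + 1 + k + 1 = M * i + 2 + k by omega]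
  nlinarith

lemma lt_four_div_mul_length_Vword {M i m : ℕ} (hM : 0 < M) (hm : m ≤ 2 * (M * i + M) + 1) :
    (m : ℚ) < 4 / M * (Vword M i).length := by
  have hlen := two_mul_length_Vword M i
  have : m * M < 4 * (Vword M i).length := by nlinarith [Nat.mul_le_mul_right M hm]
  rw [div_mul_eq_mul_div, lt_div_iff₀ (by positivity)]
  exact_mod_cast this

lemma length_le_of_infix_Vword {M i : ℕ} {U : List (Fin 2)} (hU : U <:+: Vword M i)
    (hcount : U.count h1 ≤ 1) : U.length ≤ 2 * (M * i + M) + 1 := by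
  rw [Vword_eq_blockWord] at hU
  refine length_le_of_count_le_one (fun a ha => ?_) hU hcount
  obtain ⟨k, hk, rfl⟩ := mem_map.mp ha
  have := mem_range.mp hk
  omega

theorem stmt_3_general (n : ℕ) (hn : 2 ≤ n) (M : ℕ) (hM : M = 24 * n)
    (i j : ℕ)
    (U A B A' B' : List (Fin 2))
    (hVi : Vword M i = A ++ U ++ B) (hVj : Vword M j = A' ++ U ++ B') :
    ((U.length : ℚ) <
      4 / (M : ℚ) * min ((Vword M i).length : ℚ) ((Vword M j).length : ℚ)) ∨
    (i = j ∧ A = A') := by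
  by_cases hU : 2 ≤ U.count h1
  · obtain ⟨c, a, D, rfl⟩ := exists_gap_of_two_le_count hU
    have hgapi :
        Vword M i = (A ++ replicate c h2) ++ h1 :: (replicate a h2 ++ h1 :: (D ++ B)) := by
      simp [hVi]
    have hgapj :
        Vword M j = (A' ++ replicate c h2) ++ h1 :: (replicate a h2 ++ h1 :: (D ++ B')) := by
      simp [hVj]
    obtain ⟨hij, hA⟩ := eq_of_Vword_eq_append_gap hgapi hgapj
    exact Or.inr ⟨hij, append_cancel_right hA⟩
  · have hMpos : 0 < M := by omega
    rw [mul_min_of_nonneg _ _ (by positivity)]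
    exact Or.inl (lt_min
      (lt_four_div_mul_length_Vword hMpos (length_le_of_infix_Vword ⟨A, B, hVi.symm⟩ (by omega)))
      (lt_four_div_mul_length_Vword hMpos (length_le_of_infix_Vword ⟨A', B', hVj.symm⟩ (by omega))))

/-- small cancellation, Lemma 2: if `U` is a common subword of `V_i` and `V_j`,
via literal factorizations `V_i = A U B`, `V_j = A' U B'`, then either
`|U| < (4/M)·min{|V_i|,|V_j|}`, or `i = j` and `A = A'`. -/
theorem stmt_3 (n : ℕ) (hn : 2 ≤ n) (M : ℕ) (hM : M = 24 * n)
    (i j : ℕ) (hi : 1 ≤ i) (hj : 1 ≤ j)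
    (U A B A' B' : List (Fin 2))
    (hVi : Vword M i = A ++ U ++ B) (hVj : Vword M j = A' ++ U ++ B') :
    ((U.length : ℚ) <
      4 / (M : ℚ) * min ((Vword M i).length : ℚ) ((Vword M j).length : ℚ)) ∨
    (i = j ∧ A = A') :=
  stmt_3_general n hn M hM i j U A B A' B' hVi hVj
end

section
/- Let G be a countable group and let W_1 = 1, W_2 = 1, … enumerate quadratic equations over G each of which has a solution in G, with W_i(X_i) the rewriting of W_i using a disjoint copy X_i of the variable set. Let 𝔾₁ = ⟨ ∪X_i ∪ A ∥ relations of G, W_i(X_i) = 1 (i ≥ 1) ⟩. Then the natural map G → 𝔾₁ is injective, and for any equation W = 1 over G, W = 1 has a solution in G if and only if it has a solution in 𝔾₁. -/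
/-- Words of equations over `G` with variables in `X`: elements of the free product
`G ∗ F(X)`. -/
abbrev EqnWord (G X : Type) [Group G] := Monoid.Coprod G (FreeGroup X)

/-- An equation `W = 1` over `G` has a solution in `K` relative to `ι : G → K`. -/
def HasSolution {G K : Type} [Group G] [Group K] (X : Type) (ι : G →* K)
    (W : EqnWord G X) : Prop :=
  ∃ ψ : EqnWord G X →* K, (∀ g : G, ψ (Monoid.Coprod.inl g) = ι g) ∧ ψ W = 1

/-- Rewriting `W(X) ↦ W(X_i)`: the homomorphism `G ∗ F(X) → G ∗ F(ℕ × X)` replacing each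
variable `x` by its `i`-th copy `(i, x)`. -/
def embedCopy (G X : Type) [Group G] (i : ℕ) : EqnWord G X →* EqnWord G (ℕ × X) :=
  Monoid.Coprod.map (MonoidHom.id G) (FreeGroup.map fun x => (i, x))

/-- The group `𝔾₁` of presentation (2): the quotient of `G ∗ F(⊔_i X_i)` by the normal
closure of the words `W_i(X_i)`, `i = 1, 2, …`. -/
def G1 (G X : Type) [Group G] (W : ℕ → EqnWord G X) : Type :=
  EqnWord G (ℕ × X) ⧸ Subgroup.normalClosure {w | ∃ i : ℕ, w = embedCopy G X i (W i)}

instance (G X : Type) [Group G] (W : ℕ → EqnWord G X) : Group (G1 G X W) := by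
  unfold G1; infer_instance

/-- The natural map `ν₁ : G → 𝔾₁`. -/
def nu1 (G X : Type) [Group G] (W : ℕ → EqnWord G X) : G →* G1 G X W :=
  (QuotientGroup.mk' _).comp Monoid.Coprod.inl

/-- Lemma 1: if `G` is a countable group and `W_1 = 1, W_2 = 1, …` is a
family of equations over `G` each having a solution in `G` (e.g. an enumeration of all
solvable quadratic equations, rewritten with disjoint copies `X_i` of the variables),
then the natural map `G → 𝔾₁` is injective, and an equation `W = 1` over `G` has a
solution in `G` iff it has a solution in `𝔾₁`. -/
theorem stmt_12 (G X : Type) [Group G] [Countable G] (W : ℕ → EqnWord G X)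
    (hW : ∀ i : ℕ, HasSolution X (MonoidHom.id G) (W i)) :
    Function.Injective (nu1 G X W) ∧
    ∀ W' : EqnWord G X,
      HasSolution X (MonoidHom.id G) W' ↔ HasSolution X (nu1 G X W) W' := by
  -- choose solutions
  choose ψ hψinl hψW using hW
  -- the big retraction on the free product over all copies
  set Φ : EqnWord G (ℕ × X) →* G :=
    Monoid.Coprod.lift (MonoidHom.id G)
      (FreeGroup.lift fun p : ℕ × X => ψ p.1 (Monoid.Coprod.inr (FreeGroup.of p.2))) with hΦ
  have hcomp : ∀ i, Φ.comp (embedCopy G X i) = ψ i := by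
    intro i
    apply Monoid.Coprod.hom_ext
    · ext g
      simp [embedCopy, Φ, Monoid.Coprod.map_apply_inl, Monoid.Coprod.lift_apply_inl, hψinl]
    · ext x
      simp [embedCopy, Φ, Monoid.Coprod.map_apply_inr, Monoid.Coprod.lift_apply_inr]
  -- Φ kills the normal closure
  have hker : Subgroup.normalClosure {w | ∃ i : ℕ, w = embedCopy G X i (W i)} ≤ Φ.ker := by
    apply Subgroup.normalClosure_le_normal
    rintro w ⟨i, rfl⟩
    have h := congrArg (fun f : EqnWord G X →* G => f (W i)) (hcomp i)
    simp only [MonoidHom.comp_apply] at h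
    simp [MonoidHom.mem_ker, h, hψW i]
  -- the retraction ρ : G1 → G
  set ρ : G1 G X W →* G := QuotientGroup.lift _ Φ hker with hρ
  have hretr : ∀ g : G, ρ (nu1 G X W g) = g := by
    intro g
    show ρ (QuotientGroup.mk (Monoid.Coprod.inl g)) = g
    erw [hρ, QuotientGroup.lift_mk, Monoid.Coprod.lift_apply_inl]
    rfl
  constructor
  · intro a b hab
    have := congrArg ρ hab
    simpa [hretr] using this
  · intro W'
    constructor
    · rintro ⟨φ, hφinl, hφW⟩
      exact ⟨(nu1 G X W).comp φ, fun g => by simp [hφinl g], by simp [hφW]⟩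
    · rintro ⟨φ, hφinl, hφW⟩
      refine ⟨ρ.comp φ, fun g => by simp [hφinl g, hretr], by simp [hφW]⟩
end

section
/- For n = 2, every countable group G embeds into a 2-generated group H, μ : G → H, such that (i) two elements of μ(G) are conjugate in H if and only if their preimages are conjugate in G, and (ii) an element of μ(G) is a square in H if and only if its preimage is a square in G. -/
/-!
Embed `G` at coordinate `0` into the unrestricted wreath product `G ≀ ℤ = (ℤ → G) ⋊ ℤ`, and
`G ≀ ℤ` likewise into `W = (G ≀ ℤ) ≀ ℤ`. Such a coordinate embedding reflects conjugacy and
squares: a conjugator with nonzero `ℤ`-part would move the support off coordinate `0`, and a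
square root must have `ℤ`-part `0`; both properties pass to every subgroup containing the image.

Enumerate `G` as `σ 0, σ 1, …` and label the odd position `2n + 1` by `σ n`. Let `t` be the shift
of `W` and `u ∈ W` the function whose `0`-th coordinate is the shift of `G ≀ ℤ` and whose `k`-th
coordinate is the step function equal to the label of `k` on `[0, ∞)`. For `m = 2n + 1` the
commutator `⁅t⁻ᵐ u tᵐ, u⁆` is the image of `σ n`: at coordinate `0` it is the commutator of a step
function with the shift, a delta; elsewhere one of the two step functions is trivial, because two
labelled positions never differ by the odd number `m`. Hence `⟨t, u⟩` contains the image of `G`.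
-/

/-- An embedding `μ : G → H` of `G` into a 2-generated group `H` preserving conjugacy
and squares. -/
structure ConjSquarePreservingEmbedding (G : Type) [Group G] where
  H : Type
  [grp : Group H]
  h₁ : H
  h₂ : H
  μ : G →* H
  gen : Subgroup.closure {h₁, h₂} = ⊤
  inj : Function.Injective μ
  /-- Two elements of `μ(G)` are conjugate in `H` iff their preimages are conjugate in `G`. -/
  conj : ∀ a b : G, (∃ t : H, t * μ a * t⁻¹ = μ b) ↔ ∃ t : G, t * a * t⁻¹ = b
  /-- An element of `μ(G)` is a square in `H` iff its preimage is a square in `G`. -/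
  sq : ∀ a : G, (∃ c : H, μ a = c ^ 2) ↔ ∃ c : G, a = c ^ 2

open Function SemidirectProduct
open scoped commutatorElement

namespace IntWreath

variable (K : Type) [Group K]

def shift : Multiplicative ℤ →* MulAut (ℤ → K) where
  toFun q :=
    { toFun := fun f z => f (z - q.toAdd)
      invFun := fun f z => f (z + q.toAdd)
      left_inv := fun f => funext fun z => by simp
      right_inv := fun f => funext fun z => by simp
      map_mul' := fun _ _ => rfl }
  map_one' := by ext; simp
  map_mul' := fun q r => by ext; simp [sub_sub]

end IntWreath

abbrev IntWreath (K : Type) [Group K] : Type := (ℤ → K) ⋊[IntWreath.shift K] Multiplicative ℤ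

namespace IntWreath

variable {K : Type} [Group K]

@[simp] lemma shift_apply (q : Multiplicative ℤ) (f : ℤ → K) (z : ℤ) :
    shift K q f z = f (z - q.toAdd) := rfl

variable (K) in
def single : K →* IntWreath K := inl.comp (MonoidHom.mulSingle (fun _ : ℤ => K) 0)

@[simp] lemma single_left (a : K) : (single K a).left = Pi.mulSingle 0 a := rfl

@[simp] lemma single_right (a : K) : (single K a).right = 1 := rfl

lemma single_injective : Injective (single K) :=
  inl_injective.comp (Pi.mulSingle_injective (M := fun _ : ℤ => K) 0)

lemma isConj_of_isConj_single {a b : K} (h : IsConj (single K a) (single K b)) : IsConj a b := by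
  obtain ⟨x, hx⟩ := isConj_iff.mp h
  rw [mul_inv_eq_iff_eq_mul] at hx
  have hcoord : ∀ z, x.left z * (Pi.mulSingle 0 a : ℤ → K) (z - x.right.toAdd) =
      (Pi.mulSingle 0 b : ℤ → K) z * x.left z := fun z => by
    simpa using congrFun (congrArg SemidirectProduct.left hx) z
  by_cases hn : x.right.toAdd = 0
  · exact isConj_iff.mpr ⟨x.left 0, by simpa [mul_inv_eq_iff_eq_mul, hn] using hcoord 0⟩
  · have ha : a = 1 := by simpa [Pi.mulSingle_apply, hn] using hcoord x.right.toAdd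
    have hb : b = 1 := by simpa [ha] using hcoord 0
    rw [ha, hb]

lemma isSquare_of_isSquare_single {a : K} (h : IsSquare (single K a)) : IsSquare a := by
  obtain ⟨c, hc⟩ := h
  have hc0 : c.right = 1 := by
    have := congrArg (Multiplicative.toAdd ∘ SemidirectProduct.right) hc
    simp only [comp_apply, single_right, mul_right, toAdd_one, toAdd_mul] at this
    exact Multiplicative.toAdd.injective (by simpa using (by omega : c.right.toAdd = 0))
  exact ⟨c.left 0, by simpa [hc0] using congrFun (congrArg SemidirectProduct.left hc) 0⟩

variable (K) in
def shiftGen : IntWreath K := inr (Multiplicative.ofAdd 1)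

lemma shiftGen_zpow (m : ℤ) : shiftGen K ^ m = inr (Multiplicative.ofAdd m) := by
  rw [shiftGen, ← map_zpow, ← ofAdd_zsmul, smul_eq_mul, mul_one]

lemma zpow_neg_mul_inl_mul_zpow (f : ℤ → K) (m : ℤ) :
    shiftGen K ^ (-m) * inl f * shiftGen K ^ m = inl (fun z => f (z + m)) := by
  have hm : Multiplicative.ofAdd (-m) = (Multiplicative.ofAdd m)⁻¹ := rfl
  rw [shiftGen_zpow, shiftGen_zpow, hm, ← inl_aut_inv]
  rfl

lemma commutatorElement_inl_shiftGen (f : ℤ → K) :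
    ⁅(inl f : IntWreath K), shiftGen K⁆ = inl (f * shift K (Multiplicative.ofAdd 1) f⁻¹) := by
  rw [commutatorElement_def, ← map_inv, shiftGen, ← map_inv, mul_assoc (inl f), mul_assoc (inl f),
    ← inl_aut, ← map_mul]

def stepFn (g : K) : ℤ → K := fun z => if 0 ≤ z then g else 1

@[simp] lemma stepFn_one : stepFn (1 : K) = 1 := by
  funext z; simp [stepFn]

lemma commutatorElement_inl_stepFn_shiftGen (g : K) :
    ⁅(inl (stepFn g) : IntWreath K), shiftGen K⁆ = single K g := by
  rw [commutatorElement_inl_shiftGen, single, MonoidHom.comp_apply]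
  congr 1
  funext z
  rcases eq_or_ne z 0 with rfl | hz
  · simp [stepFn]
  · rw [MonoidHom.mulSingle_apply, Pi.mulSingle_eq_of_ne hz]
    simp only [Pi.mul_apply, shift_apply, Pi.inv_apply, stepFn, toAdd_ofAdd]
    split_ifs <;> first | omega | simp

variable {G : Type} [Group G]

def labelledGen (a : ℤ → G) : IntWreath (IntWreath G) :=
  inl fun k => if k = 0 then shiftGen G else inl (stepFn (a k))

lemma commutatorElement_conj_labelledGen (a : ℤ → G) {m : ℤ} (hm : m ≠ 0) (hneg : a (-m) = 1)
    (hdisj : ∀ k, a k = 1 ∨ a (k + m) = 1) :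
    ⁅shiftGen _ ^ (-m) * labelledGen a * shiftGen _ ^ m, labelledGen a⁆ =
      single _ (single G (a m)) := by
  rw [labelledGen, zpow_neg_mul_inl_mul_zpow, ← map_commutatorElement, single,
    MonoidHom.comp_apply]
  congr 1
  funext k
  rw [MonoidHom.mulSingle_apply]
  show ⁅(_ : IntWreath G), _⁆ = _
  rcases eq_or_ne k 0 with rfl | hk
  · simp [hm, commutatorElement_inl_stepFn_shiftGen]
  rw [Pi.mulSingle_eq_of_ne hk]
  rcases eq_or_ne (k + m) 0 with hkm | hkm
  · obtain rfl : k = -m := by omega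
    simp [hkm, hneg, hm]
  · rcases hdisj k with h | h <;> simp [hk, hkm, h]

noncomputable def oddLabel (σ : ℕ → G) : ℤ → G := extend (fun n : ℕ => 2 * (n : ℤ) + 1) σ 1

lemma oddLabel_apply (σ : ℕ → G) (n : ℕ) : oddLabel σ (2 * n + 1) = σ n :=
  (show Injective fun n : ℕ => 2 * (n : ℤ) + 1 from fun i j h => by simp at h; omega).extend_apply
    σ 1 n

lemma oddLabel_eq_one (σ : ℕ → G) {k : ℤ} (hk : k ≤ 0 ∨ Even k) : oddLabel σ k = 1 :=
  extend_apply' _ _ _ fun ⟨n, hn⟩ => by rcases hk with hk | ⟨r, hr⟩ <;> omega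

lemma single_single_mem_closure (σ : ℕ → G) (n : ℕ) :
    single _ (single G (σ n)) ∈ Subgroup.closure {shiftGen _, labelledGen (oddLabel σ)} := by
  have hdisj (k : ℤ) : oddLabel σ k = 1 ∨ oddLabel σ (k + (2 * n + 1)) = 1 := by
    rcases Int.even_or_odd k with hk | hk
    · exact .inl (oddLabel_eq_one σ (.inr hk))
    · exact .inr (oddLabel_eq_one σ (.inr (hk.add_odd (odd_two_mul_add_one _))))
  rw [← oddLabel_apply σ n, ← commutatorElement_conj_labelledGen _ (by omega)
    (oddLabel_eq_one σ (.inl (by omega))) hdisj]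
  have ht : shiftGen _ ∈ Subgroup.closure {shiftGen _, labelledGen (oddLabel σ)} :=
    Subgroup.subset_closure (Set.mem_insert _ _)
  have hu : labelledGen (oddLabel σ) ∈ Subgroup.closure {shiftGen _, labelledGen (oddLabel σ)} :=
    Subgroup.subset_closure (Set.mem_insert_of_mem _ rfl)
  have hconj := mul_mem (mul_mem (zpow_mem ht (-(2 * n + 1))) hu) (zpow_mem ht (2 * n + 1))
  rw [commutatorElement_def]
  exact mul_mem (mul_mem (mul_mem hconj hu) (inv_mem hconj)) (inv_mem hu)

end IntWreath

def ConjSquarePreservingEmbedding.ofClosure {G W : Type} [Group G] [Group W] (x y : W)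
    (f : G →* W) (hf : Injective f) (hmem : ∀ a, f a ∈ Subgroup.closure {x, y})
    (hconj : ∀ a b, IsConj (f a) (f b) → IsConj a b) (hsq : ∀ a, IsSquare (f a) → IsSquare a) :
    ConjSquarePreservingEmbedding G where
  H := Subgroup.closure {x, y}
  h₁ := ⟨x, Subgroup.subset_closure (Set.mem_insert _ _)⟩
  h₂ := ⟨y, Subgroup.subset_closure (Set.mem_insert_of_mem _ rfl)⟩
  μ := f.codRestrict _ hmem
  gen := by
    convert Subgroup.closure_closure_coe_preimage (k := {x, y}) using 2
    ext; simp [Subtype.ext_iff]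
  inj a b h := hf (congrArg Subtype.val h)
  conj a b := by
    rw [← isConj_iff, ← isConj_iff]
    exact ⟨fun h => hconj a b ((Subgroup.subtype _).map_isConj h), (MonoidHom.map_isConj _ ·)⟩
  sq a := by
    rw [← isSquare_iff_exists_sq, ← isSquare_iff_exists_sq]
    exact ⟨fun h => hsq a (h.map (Subgroup.subtype _)), (IsSquare.map _ ·)⟩

/-- Theorem 1 with n = 2: every countable group `G` embeds into a
2-generated group `H` preserving conjugacy and squares. -/
theorem stmt_15 (G : Type) [Group G] [Countable G] :
    Nonempty (ConjSquarePreservingEmbedding G) := by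
  obtain ⟨σ, hσ⟩ := exists_surjective_nat G
  refine ⟨.ofClosure (IntWreath.shiftGen _) (IntWreath.labelledGen (IntWreath.oddLabel σ))
    ((IntWreath.single _).comp (IntWreath.single G))
    (IntWreath.single_injective.comp IntWreath.single_injective) ?_ ?_ ?_⟩
  · intro a
    obtain ⟨n, rfl⟩ := hσ a
    exact IntWreath.single_single_mem_closure σ n
  · exact fun a b h =>
      IntWreath.isConj_of_isConj_single (IntWreath.isConj_of_isConj_single h)
  · exact fun a h =>
      IntWreath.isSquare_of_isSquare_single (IntWreath.isSquare_of_isSquare_single h)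
end
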